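/- arXiv:1410.2385 — 3 statements merged into one kernel-verified Lean document; each statement's English description precedes it below -/
import Mathlib

section
/- For every integer s and every ω ∈ ℂ with ω ∉ i(-∞, -1/√(2c)], ω ∉ i[1/√(2c), ∞) and ω ≠ 0, the denominator 1 + a^2 + a(iω/√(2c))(u + 1/u) does not vanish for |u| = 1, and the contour integral F_s(iω/√(2c)) := (2πi)^{-1} ∮_{|u|=1} u^{s} / ((1 + a^2 + a(iω/√(2c))(u + 1/u))·u) du over the positively oriented unit circle satisfies F_s(iω/√(2c)) = i^{|s|} · G(1/ω)^{|s|} / ((1+a^2) · ω · √(ω^{-2}+2c)). -/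
/-- `c = a/(1+a²)`. -/
noncomputable def cOf (a : ℝ) : ℝ := a / (1 + a ^ 2)

/-- The branch of the logarithm with argument in `(-π/2, 3π/2]`:
`L(z) = Log(-iz) + iπ/2` where `Log` is the principal branch. -/
noncomputable def Lbr (z : ℂ) : ℂ :=
  Complex.log (-Complex.I * z) + Complex.I * ((Real.pi : ℂ) / 2)

/-- The branch `√(ω² + 2c) = exp((1/2)L(ω + i√(2c)) + (1/2)L(ω - i√(2c)))`. -/
noncomputable def sqBr (a : ℝ) (ω : ℂ) : ℂ :=
  Complex.exp ((1 / 2 : ℂ) * Lbr (ω + Complex.I * (Real.sqrt (2 * cOf a) : ℂ)) +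
    (1 / 2 : ℂ) * Lbr (ω - Complex.I * (Real.sqrt (2 * cOf a) : ℂ)))

/-- `G(ω) = (ω - √(ω² + 2c))/√(2c)`. -/
noncomputable def Gbr (a : ℝ) (ω : ℂ) : ℂ :=
  (ω - sqBr a ω) / (Real.sqrt (2 * cOf a) : ℂ)

/-- The branch cuts `𝒞 = i·((-∞, -1/√(2c)] ∪ [-√(2c), √(2c)] ∪ [1/√(2c), ∞))`. -/
def cuts (a : ℝ) : Set ℂ :=
  {z : ℂ | ∃ t : ℝ, z = Complex.I * (t : ℂ) ∧
    (t ≤ -(1 / Real.sqrt (2 * cOf a)) ∨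
      (-Real.sqrt (2 * cOf a) ≤ t ∧ t ≤ Real.sqrt (2 * cOf a)) ∨
      1 / Real.sqrt (2 * cOf a) ≤ t)}

/-!
Write `ν = ω⁻¹`, `σ = √(2c)`, `S = √(ν² + σ²)` (the branch `sqBr`) and `A = a·iω/σ`. Then
`(1 + a² + A(u + u⁻¹))·u = A(u - u₁)(u - u₁⁻¹)` with `u₁ = iG(ν) = i(ν - S)/σ`, `u₁⁻¹ = i(ν + S)/σ`,
because `(ν - S)(ν + S) = -σ²` and `2a = (1 + a²)σ²`. Off `i[-σ, σ]` the two half-logarithms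
defining `S` differ in argument by less than `π`, which gives `Re(ν̄ S) > 0`, hence
`|ν - S| < |ν + S|` and so `|u₁| < 1 < |u₁⁻¹|`. For `s ≥ 0` the integral is the residue at `u₁`,
`u₁^s / (A(u₁ - u₁⁻¹)) = (iG(ν))^s / ((1 + a²)ωS)`; the substitution `u ↦ u⁻¹` maps the integrand
for `-s` to the one for `s`.
-/

open Complex ComplexConjugate Metric

section Branch

-- `sqBr a` is `branchSqrt (√(2 * cOf a))` definitionally.
noncomputable def branchSqrt (σ : ℝ) (ν : ℂ) : ℂ :=
  exp ((1 / 2 : ℂ) * Lbr (ν + I * σ) + (1 / 2 : ℂ) * Lbr (ν - I * σ))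

theorem exp_Lbr {z : ℂ} (hz : z ≠ 0) : exp (Lbr z) = z := by
  have hI : exp (I * (Real.pi / 2 : ℂ)) = I := by
    rw [mul_comm, exp_mul_I, ← ofReal_ofNat, ← ofReal_div, ← ofReal_cos, ← ofReal_sin,
      Real.cos_pi_div_two, Real.sin_pi_div_two]
    simp
  rw [Lbr, exp_add, exp_log (by simpa using hz), hI]
  linear_combination (-z) * I_sq

theorem Lbr_im (z : ℂ) : (Lbr z).im = arg (-I * z) + Real.pi / 2 := by
  simp [Lbr, log_im]

theorem abs_arg_sub_arg_lt_pi {x y : ℂ} (him : x.im = y.im) (h : x.im ≠ 0 ∨ 0 < x.re * y.re) :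
    |arg x - arg y| < Real.pi := by
  rcases lt_trichotomy x.im 0 with hneg | hzero | hpos
  · have hx := arg_neg_iff.mpr hneg
    have hy := arg_neg_iff.mpr (him ▸ hneg)
    have := neg_pi_lt_arg x
    have := neg_pi_lt_arg y
    rw [abs_lt]; constructor <;> linarith
  · have hre : 0 < x.re * y.re := h.resolve_left (not_not.mpr hzero)
    have hargs : arg x = arg y := by
      rcases pos_and_pos_or_neg_and_neg_of_mul_pos hre with ⟨hx, hy⟩ | ⟨hx, hy⟩
      · rw [arg_eq_zero_iff.mpr ⟨hx.le, hzero⟩, arg_eq_zero_iff.mpr ⟨hy.le, him ▸ hzero⟩]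
      · rw [arg_eq_pi_iff.mpr ⟨hx, hzero⟩, arg_eq_pi_iff.mpr ⟨hy, him ▸ hzero⟩]
    simp [hargs, Real.pi_pos]
  · have hx := arg_nonneg_iff.mpr hpos.le
    have hy := arg_nonneg_iff.mpr (him ▸ hpos).le
    have := arg_lt_pi_iff.mpr (Or.inr hpos.ne')
    have := arg_lt_pi_iff.mpr (Or.inr (him ▸ hpos).ne')
    rw [abs_lt]; constructor <;> linarith

theorem re_conj_mul_exp_half_Lbr_pos {z w : ℂ} (hz : z ≠ 0)
    (hzw : |(Lbr w).im - (Lbr z).im| < Real.pi) :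
    0 < (conj z * exp ((1 / 2 : ℂ) * Lbr z + (1 / 2 : ℂ) * Lbr w)).re := by
  have hconj : conj z = exp (conj (Lbr z)) := by rw [exp_conj, exp_Lbr hz]
  rw [hconj, ← exp_add, exp_re]
  refine mul_pos (Real.exp_pos _) (Real.cos_pos_of_mem_Ioo ?_)
  simp only [add_im, conj_im, mul_im, one_div, inv_re, inv_im]
  norm_num
  constructor <;> linarith [abs_lt.mp hzw]

variable {σ : ℝ} {ν : ℂ}

theorem add_I_mul_ne_zero_and_sub_I_mul_ne_zero (hσ : 0 ≤ σ) (hν : ν.re ≠ 0 ∨ σ < |ν.im|) :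
    ν + I * σ ≠ 0 ∧ ν - I * σ ≠ 0 := by
  constructor <;> intro h <;>
  · have hre : ν.re = 0 := by simpa using congrArg re h
    have him : |ν.im| ≤ σ := by
      have := congrArg im h
      simp only [add_im, sub_im, mul_im, I_re, I_im, ofReal_re, ofReal_im, zero_im] at this
      exact abs_le.mpr ⟨by linarith, by linarith⟩
    exact hν.elim (· hre) (fun h' => h'.not_ge him)

theorem branchSqrt_sq (hσ : 0 ≤ σ) (hν : ν.re ≠ 0 ∨ σ < |ν.im|) :
    branchSqrt σ ν ^ 2 = ν ^ 2 + σ ^ 2 := by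
  obtain ⟨hz, hw⟩ := add_I_mul_ne_zero_and_sub_I_mul_ne_zero hσ hν
  rw [branchSqrt, ← exp_nat_mul, Nat.cast_ofNat,
    show (2 : ℂ) * ((1 / 2) * Lbr (ν + I * σ) + (1 / 2) * Lbr (ν - I * σ)) =
      Lbr (ν + I * σ) + Lbr (ν - I * σ) by ring, exp_add, exp_Lbr hz, exp_Lbr hw]
  linear_combination (-(σ : ℂ) ^ 2) * I_sq

theorem re_conj_mul_branchSqrt_pos (hσ : 0 ≤ σ) (hν : ν.re ≠ 0 ∨ σ < |ν.im|) :
    0 < (conj ν * branchSqrt σ ν).re := by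
  set z := ν + I * σ
  set w := ν - I * σ
  obtain ⟨hz, hw⟩ : z ≠ 0 ∧ w ≠ 0 := add_I_mul_ne_zero_and_sub_I_mul_ne_zero hσ hν
  -- `-I w` and `-I z` lie on a common horizontal line, not on opposite sides of `0`
  have hzw : |(Lbr w).im - (Lbr z).im| < Real.pi := by
    rw [Lbr_im, Lbr_im, add_sub_add_right_eq_sub]
    refine abs_arg_sub_arg_lt_pi (by simp [z, w]) ?_
    rcases hν with h | h
    · left; simpa [w] using h
    · right
      simp only [z, w, neg_mul, neg_re, mul_re, mul_im, I_re, I_im, sub_re, sub_im, add_re, add_im,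
        ofReal_re, ofReal_im]
      nlinarith [abs_mul_abs_self ν.im, abs_nonneg ν.im]
  have h₁ : 0 < (conj z * branchSqrt σ ν).re := re_conj_mul_exp_half_Lbr_pos hz hzw
  have h₂ : 0 < (conj w * branchSqrt σ ν).re := by
    rw [branchSqrt, add_comm]
    exact re_conj_mul_exp_half_Lbr_pos hw (abs_sub_comm (Lbr w).im _ ▸ hzw)
  have hconj : conj ν = (conj z + conj w) / 2 := by
    simp only [z, w, map_add, map_sub]; ring
  rw [hconj, div_mul_eq_mul_div, add_mul, div_ofNat_re, add_re]
  positivity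

theorem norm_sub_branchSqrt_lt (hσ : 0 < σ) (hν : ν.re ≠ 0 ∨ σ < |ν.im|) :
    ‖ν - branchSqrt σ ν‖ < σ := by
  set S := branchSqrt σ ν
  have hprod : ‖ν - S‖ * ‖ν + S‖ = σ ^ 2 := by
    rw [← norm_mul, show (ν - S) * (ν + S) = -(σ : ℂ) ^ 2 by
      linear_combination -branchSqrt_sq hσ.le hν, norm_neg, norm_pow, norm_real,
      Real.norm_of_nonneg hσ.le]
  have hlt : ‖ν - S‖ < ‖ν + S‖ := by
    refine lt_of_pow_lt_pow_left₀ 2 (norm_nonneg _) ?_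
    have hre : (ν * conj S).re = (conj ν * S).re := by
      rw [← conj_re, map_mul, conj_conj, mul_comm]
    rw [Complex.sq_norm, Complex.sq_norm, normSq_sub, normSq_add, hre]
    linarith [re_conj_mul_branchSqrt_pos hσ.le hν]
  nlinarith [norm_nonneg (ν - S)]

end Branch

theorem circleMap_zero_one_neg (θ : ℝ) : circleMap 0 1 (-θ) = (circleMap 0 1 θ)⁻¹ := by
  simp [circleMap, ← exp_neg]

-- `u ↦ u⁻¹` reverses the orientation of the circle, which absorbs the sign of `d(u⁻¹) = -u⁻² du`.
theorem circleIntegral_comp_inv (f : ℂ → ℂ) :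
    (∮ u in C(0, 1), f u) = ∮ u in C(0, 1), u⁻¹ ^ 2 * f u⁻¹ := by
  set F : ℝ → ℂ := fun θ => deriv (circleMap 0 1) θ • f (circleMap 0 1 θ)
  have hF : ∀ θ, F (-θ) =
      deriv (circleMap 0 1) θ • ((circleMap 0 1 θ)⁻¹ ^ 2 * f (circleMap 0 1 θ)⁻¹) := fun θ => by
    have h0 : circleMap 0 1 θ ≠ 0 := circleMap_ne_center one_ne_zero
    simp only [F, deriv_circleMap, circleMap_zero_one_neg, smul_eq_mul]
    field_simp
  have hper : Function.Periodic F (2 * Real.pi) := fun θ => by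
    simp only [F, deriv_circleMap, periodic_circleMap 0 1 θ]
  calc (∮ u in C(0, 1), f u) = ∫ θ in -(2 * Real.pi)..-(2 * Real.pi) + 2 * Real.pi, F θ := by
        rw [hper.intervalIntegral_add_eq _ 0, zero_add]; rfl
    _ = ∫ θ in (0 : ℝ)..2 * Real.pi, F (-θ) := by
        rw [intervalIntegral.integral_comp_neg]; simp
    _ = ∮ u in C(0, 1), u⁻¹ ^ 2 * f u⁻¹ := by
        simp only [hF]; rfl

theorem circleIntegral_pow_div_mul_sub_mul_sub {A u₁ u₂ : ℂ} (hA : A ≠ 0) (hu₁ : ‖u₁‖ < 1)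
    (hu₂ : 1 < ‖u₂‖) (n : ℕ) :
    (∮ u in C(0, 1), u ^ n / (A * (u - u₁) * (u - u₂))) =
      2 * Real.pi * I * (u₁ ^ n / (A * (u₁ - u₂))) := by
  have hd : DifferentiableOn ℂ (fun u => u ^ n / (A * (u - u₂))) (closedBall 0 1) := by
    refine (differentiable_pow n).differentiableOn.div (by fun_prop) fun u hu => ?_
    have hu' : ‖u‖ ≤ 1 := mem_closedBall_zero_iff.mp hu
    exact mul_ne_zero hA (sub_ne_zero.mpr fun h => by linarith [h ▸ hu'])
  rw [← smul_eq_mul, ← hd.circleIntegral_sub_inv_smul (mem_ball_zero_iff.mpr hu₁)]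
  refine circleIntegral.integral_congr zero_le_one fun u _ => ?_
  simp only [smul_eq_mul, div_eq_mul_inv, mul_inv]
  ring

theorem one_lt_norm_inv {𝕜 : Type*} [NormedDivisionRing 𝕜] {z : 𝕜} (hz : z ≠ 0) (h : ‖z‖ < 1) :
    1 < ‖z⁻¹‖ := by
  rw [norm_inv]; exact one_lt_inv_iff₀.mpr ⟨norm_pos_iff.mpr hz, h⟩

section Laurent

variable {A B u₁ : ℂ}

theorem add_mul_add_inv_mul_self_eq (hu₁ : u₁ ≠ 0) (hB : A * (u₁ + u₁⁻¹) = -B) {u : ℂ}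
    (hu : u ≠ 0) : (B + A * (u + u⁻¹)) * u = A * (u - u₁) * (u - u₁⁻¹) := by
  rw [← neg_neg B, ← hB]
  field_simp
  ring

theorem add_mul_add_inv_ne_zero (hA : A ≠ 0) (hu₁ : ‖u₁‖ < 1) (hu₁0 : u₁ ≠ 0)
    (hB : A * (u₁ + u₁⁻¹) = -B) {u : ℂ} (hu : ‖u‖ = 1) : B + A * (u + u⁻¹) ≠ 0 := by
  have hu0 : u ≠ 0 := norm_ne_zero_iff.mp (hu.symm ▸ one_ne_zero)
  have hu₂ : 1 < ‖u₁⁻¹‖ := one_lt_norm_inv hu₁0 hu₁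
  intro h
  have hfactor := add_mul_add_inv_mul_self_eq hu₁0 hB hu0
  rw [h, zero_mul, eq_comm] at hfactor
  rcases mul_eq_zero.mp hfactor with h | h
  · rcases mul_eq_zero.mp h with h | h
    · exact hA h
    · rw [sub_eq_zero.mp h] at hu; linarith
  · rw [sub_eq_zero.mp h] at hu; linarith

theorem circleIntegral_zpow_div_add_mul_add_inv (hA : A ≠ 0) (hu₁ : ‖u₁‖ < 1) (hu₁0 : u₁ ≠ 0)
    (hB : A * (u₁ + u₁⁻¹) = -B) (s : ℤ) :
    (2 * (Real.pi : ℂ) * I)⁻¹ * (∮ u in C(0, 1), u ^ s / ((B + A * (u + u⁻¹)) * u)) =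
      u₁ ^ s.natAbs / (A * (u₁ - u₁⁻¹)) := by
  have hu₂ : 1 < ‖u₁⁻¹‖ := one_lt_norm_inv hu₁0 hu₁
  have hnat : ∀ n : ℕ, (∮ u in C(0, 1), u ^ (n : ℤ) / ((B + A * (u + u⁻¹)) * u)) =
      2 * Real.pi * I * (u₁ ^ n / (A * (u₁ - u₁⁻¹))) := fun n => by
    rw [← circleIntegral_pow_div_mul_sub_mul_sub hA hu₁ hu₂]
    refine circleIntegral.integral_congr zero_le_one fun u hu => ?_
    have hu0 : u ≠ 0 := ne_zero_of_mem_sphere one_ne_zero ⟨u, hu⟩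
    rw [zpow_natCast, add_mul_add_inv_mul_self_eq hu₁0 hB hu0]
  have hsymm : ∀ n : ℕ, (∮ u in C(0, 1), u ^ (-(n : ℤ)) / ((B + A * (u + u⁻¹)) * u)) =
      ∮ u in C(0, 1), u ^ (n : ℤ) / ((B + A * (u + u⁻¹)) * u) := fun n => by
    rw [circleIntegral_comp_inv]
    refine circleIntegral.integral_congr zero_le_one fun u hu => ?_
    have hu0 : u ≠ 0 := ne_zero_of_mem_sphere one_ne_zero ⟨u, hu⟩
    rw [inv_inv, inv_zpow', neg_neg, add_comm u⁻¹]
    field_simp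
  obtain ⟨n, rfl | rfl⟩ := s.eq_nat_or_neg
  · rw [hnat, inv_mul_cancel_left₀ two_pi_I_ne_zero, Int.natAbs_natCast]
  · rw [hsymm, hnat, inv_mul_cancel_left₀ two_pi_I_ne_zero, Int.natAbs_neg, Int.natAbs_natCast]

end Laurent

theorem inv_re_ne_zero_or_lt_abs_inv_im {σ : ℝ} {ω : ℂ} (hω0 : ω ≠ 0)
    (h₁ : ¬∃ t : ℝ, t ≤ -(1 / σ) ∧ ω = I * t) (h₂ : ¬∃ t : ℝ, 1 / σ ≤ t ∧ ω = I * t) :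
    (ω⁻¹).re ≠ 0 ∨ σ < |(ω⁻¹).im| := by
  by_contra! h
  set y := (ω⁻¹).im
  have hy : ω⁻¹ = I * y := Complex.ext (by simp [h.1]) (by simp [y])
  have hy0 : y ≠ 0 := fun h0 => inv_ne_zero hω0 (by simp [hy, h0])
  have hω : ω = I * ((-y⁻¹ : ℝ) : ℂ) := by
    rw [← inv_inv ω, hy, mul_inv, inv_I]; push_cast; ring
  have hbound : 1 / σ ≤ |-y⁻¹| := by
    rw [abs_neg, abs_inv, one_div]; exact inv_anti₀ (abs_pos.mpr hy0) h.2
  rcases le_abs'.mp hbound with ht | ht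
  · exact h₁ ⟨_, ht, hω⟩
  · exact h₂ ⟨_, ht, hω⟩

section GFunction

variable {a : ℝ} {ν : ℂ}

theorem sqrt_two_cOf_pos (ha : 0 < a) : 0 < Real.sqrt (2 * cOf a) :=
  Real.sqrt_pos.mpr (by unfold cOf; positivity)

theorem two_mul_eq_one_add_sq_mul_sqrt_two_cOf_sq (ha : 0 ≤ a) :
    2 * a = (1 + a ^ 2) * Real.sqrt (2 * cOf a) ^ 2 := by
  rw [Real.sq_sqrt (by unfold cOf; positivity), cOf]
  field_simp

theorem norm_I_mul_Gbr_lt_one (ha : 0 < a) (hν : ν.re ≠ 0 ∨ Real.sqrt (2 * cOf a) < |ν.im|) :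
    ‖I * Gbr a ν‖ < 1 := by
  have hσ := sqrt_two_cOf_pos ha
  rw [norm_mul, norm_I, one_mul, Gbr, norm_div, norm_real, Real.norm_of_nonneg hσ.le,
    div_lt_one hσ]
  exact norm_sub_branchSqrt_lt hσ hν

theorem I_mul_Gbr_mul_I_mul_add_div (ha : 0 < a)
    (hν : ν.re ≠ 0 ∨ Real.sqrt (2 * cOf a) < |ν.im|) :
    I * Gbr a ν * (I * ((ν + sqBr a ν) / Real.sqrt (2 * cOf a))) = 1 := by
  have hσ : (Real.sqrt (2 * cOf a) : ℂ) ≠ 0 := ofReal_ne_zero.mpr (sqrt_two_cOf_pos ha).ne'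
  have hS : sqBr a ν ^ 2 = ν ^ 2 + Real.sqrt (2 * cOf a) ^ 2 :=
    branchSqrt_sq (sqrt_two_cOf_pos ha).le hν
  rw [Gbr]
  field_simp
  linear_combination (ν ^ 2 - sqBr a ν ^ 2) * I_sq + hS

end GFunction

theorem statement0_general (a : ℝ) (ha0 : 0 < a) (s : ℤ) (ω : ℂ)
    (hω1 : ¬ ∃ t : ℝ, t ≤ -(1 / Real.sqrt (2 * cOf a)) ∧ ω = Complex.I * (t : ℂ))
    (hω2 : ¬ ∃ t : ℝ, 1 / Real.sqrt (2 * cOf a) ≤ t ∧ ω = Complex.I * (t : ℂ))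
    (hω0 : ω ≠ 0) :
    (∀ u : ℂ, ‖u‖ = 1 →
      1 + (a : ℂ) ^ 2 +
        (a : ℂ) * (Complex.I * ω / (Real.sqrt (2 * cOf a) : ℂ)) * (u + u⁻¹) ≠ 0) ∧
    (2 * (Real.pi : ℂ) * Complex.I)⁻¹ *
        (∮ u in C(0, 1), u ^ s /
          ((1 + (a : ℂ) ^ 2 +
            (a : ℂ) * (Complex.I * ω / (Real.sqrt (2 * cOf a) : ℂ)) * (u + u⁻¹)) * u)) =
      Complex.I ^ s.natAbs * Gbr a ω⁻¹ ^ s.natAbs /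
        ((1 + (a : ℂ) ^ 2) * ω * sqBr a ω⁻¹) := by
  have hν := inv_re_ne_zero_or_lt_abs_inv_im hω0 hω1 hω2
  have hroots := I_mul_Gbr_mul_I_mul_add_div ha0 hν
  have hu₁ := norm_I_mul_Gbr_lt_one ha0 hν
  have hu₁0 := left_ne_zero_of_mul_eq_one hroots
  have hσ0 : (Real.sqrt (2 * cOf a) : ℂ) ≠ 0 := ofReal_ne_zero.mpr (sqrt_two_cOf_pos ha0).ne'
  have hσsq : (2 * a : ℂ) = (1 + a ^ 2) * Real.sqrt (2 * cOf a) ^ 2 := by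
    exact_mod_cast two_mul_eq_one_add_sq_mul_sqrt_two_cOf_sq ha0.le
  set σ := Real.sqrt (2 * cOf a)
  set ν := ω⁻¹
  set S := sqBr a ν
  have hων : ω * ν = 1 := mul_inv_cancel₀ hω0
  have hG : Gbr a ν = (ν - S) / σ := rfl
  have hsum : a * (I * ω / σ) * (I * Gbr a ν + (I * Gbr a ν)⁻¹) = -(1 + (a : ℂ) ^ 2) := by
    rw [inv_eq_of_mul_eq_one_right hroots, hG]
    field_simp
    linear_combination (2 * a * ω * ν) * I_sq - 2 * a * hων - hσsq
  have hdiff : a * (I * ω / σ) * (I * Gbr a ν - (I * Gbr a ν)⁻¹) = (1 + (a : ℂ) ^ 2) * ω * S := by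
    rw [inv_eq_of_mul_eq_one_right hroots, hG]
    field_simp
    linear_combination (-2 * a * S) * I_sq + S * hσsq
  have hA : (a : ℂ) * (I * ω / σ) ≠ 0 := by simp [ha0.ne', hω0, hσ0]
  refine ⟨fun u hu => add_mul_add_inv_ne_zero hA hu₁ hu₁0 hsum hu, ?_⟩
  rw [circleIntegral_zpow_div_add_mul_add_inv hA hu₁ hu₁0 hsum, hdiff, mul_pow]

/-- For every integer `s` and every `ω ∈ ℂ` with
`ω ∉ i(-∞, -1/√(2c)]`, `ω ∉ i[1/√(2c), ∞)` and `ω ≠ 0`, the denominator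
`1 + a² + a(iω/√(2c))(u + 1/u)` does not vanish for `|u| = 1`, and
`F_s(iω/√(2c)) := (2πi)⁻¹ ∮_{|u|=1} u^s / ((1 + a² + a(iω/√(2c))(u + 1/u))·u) du`
satisfies `F_s(iω/√(2c)) = i^{|s|}·G(1/ω)^{|s|} / ((1+a²)·ω·√(ω⁻²+2c))`. -/
theorem statement0 (a : ℝ) (ha0 : 0 < a) (ha1 : a < 1) (s : ℤ) (ω : ℂ)
    (hω1 : ¬ ∃ t : ℝ, t ≤ -(1 / Real.sqrt (2 * cOf a)) ∧ ω = Complex.I * (t : ℂ))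
    (hω2 : ¬ ∃ t : ℝ, 1 / Real.sqrt (2 * cOf a) ≤ t ∧ ω = Complex.I * (t : ℂ))
    (hω0 : ω ≠ 0) :
    (∀ u : ℂ, ‖u‖ = 1 →
      1 + (a : ℂ) ^ 2 +
        (a : ℂ) * (Complex.I * ω / (Real.sqrt (2 * cOf a) : ℂ)) * (u + u⁻¹) ≠ 0) ∧
    (2 * (Real.pi : ℂ) * Complex.I)⁻¹ *
        (∮ u in C(0, 1), u ^ s /
          ((1 + (a : ℂ) ^ 2 +
            (a : ℂ) * (Complex.I * ω / (Real.sqrt (2 * cOf a) : ℂ)) * (u + u⁻¹)) * u)) =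
      Complex.I ^ s.natAbs * Gbr a ω⁻¹ ^ s.natAbs /
        ((1 + (a : ℂ) ^ 2) * ω * sqBr a ω⁻¹) :=
  statement0_general a ha0 s ω hω1 hω2 hω0
end

section
/- Let -(1/2)√(1-2c) < ξ < 0 and suppose ω_c ∈ i·(√(2c), 1) satisfies g_ξ′(ω_c) = 0. Then g_ξ′(-1/ω_c) = 0; moreover the complex second derivative g_ξ″(ω_c) is a negative real number and g_ξ″(-1/ω_c) is a positive real number. -/
/-- The branch of the logarithm with argument in `(0, 2π]`: `L₃(z) = Log(-z) + iπ`. -/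
noncomputable def L3 (z : ℂ) : ℂ := Complex.log (-z) + Complex.I * (Real.pi : ℂ)

/-- The saddle point function `g_ξ(ω) = L(ω) - ξ·L(G(ω)) + ξ·L₃(G(1/ω))`. -/
noncomputable def gxi (a ξ : ℝ) (ω : ℂ) : ℂ :=
  Lbr ω - (ξ : ℂ) * Lbr (Gbr a ω) + (ξ : ℂ) * L3 (Gbr a ω⁻¹)

/-- The saddle point equation `1 + ξ₁·ω/√(ω²+2c) + ξ₂/(ω·√(ω⁻²+2c)) = 0`. -/
def saddleEq (a ξ₁ ξ₂ : ℝ) (ω : ℂ) : Prop :=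
  1 + (ξ₁ : ℂ) * ω / sqBr a ω + (ξ₂ : ℂ) / (ω * sqBr a ω⁻¹) = 0

/-!
On `|Im ζ| > √(2c)` the branch `√(ζ² + 2c)` equals `ζ · √(1 + 2c/ζ²)` with the principal
square root. Near a point `i u` with `√(2c) < u < 1/√(2c)` both `ω` and `1/ω` lie in that region,
so `g_ξ` is an explicit holomorphic function there, with
`g_ξ'(ω) = (1 + ξ/√(1 + 2c/ω²) + ξ/√(1 + 2cω²)) / ω`.
At `ω = i u` the numerator is the real number `1 + ξ/√(1 - 2c/u²) + ξ/√(1 - 2cu²)`, which is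
invariant under `u ↦ 1/u`; since `-1/(i t) = i/t`, the critical point `i t` is mirrored at `i/t`.
Where the numerator vanishes, `g_ξ''(i u) = 2cξ (1/(u⁴y³) - 1/x³)` with `y = √(1 - 2c/u²)` and
`x = √(1 - 2cu²)`; for `u < 1` one has `u⁴y³ < x³` (after squaring,
`u²(u² - 2c)³ < (1 - 2cu²)³`), and `ξ < 0` gives the signs at `i t` and at `i/t`.
-/

open Complex Filter Topology

lemma two_mul_cOf_pos {a : ℝ} (ha : 0 < a) : 0 < 2 * cOf a := by unfold cOf; positivity

lemma log_mul_of_re_pos {x y : ℂ} (hx : 0 < x.re) (hy : 0 < y.re) :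
    log (x * y) = log x + log y := by
  have hx' := abs_lt.mp (abs_arg_lt_pi_div_two_iff.mpr (Or.inl hx))
  have hy' := abs_lt.mp (abs_arg_lt_pi_div_two_iff.mpr (Or.inl hy))
  exact log_mul (fun h => by simp [h] at hx) (fun h => by simp [h] at hy)
    ⟨by linarith, by linarith⟩

lemma exp_half_log_add_half_log_sub {w : ℂ} {s : ℝ} (hs : 0 ≤ s) (hw : s < w.re) :
    exp (1 / 2 * log (w + s) + 1 / 2 * log (w - s)) =
      w * exp (1 / 2 * log (1 - s ^ 2 / w ^ 2)) := by
  have hw₀ : 0 < w.re := hs.trans_lt hw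
  have hN : 0 < normSq w := normSq_pos.mpr fun h => by simp [h] at hw₀
  have hp : 0 < ((w + s) / w).re := by
    rw [div_re, ← add_div]
    apply div_pos _ hN
    simp only [add_re, ofReal_re, add_im, ofReal_im, add_zero]
    nlinarith [mul_self_nonneg w.im]
  have hq : 0 < ((w - s) / w).re := by
    rw [div_re, ← add_div]
    apply div_pos _ hN
    simp only [sub_re, ofReal_re, sub_im, ofReal_im, sub_zero]
    nlinarith [mul_self_nonneg w.im]
  have hw0 : w ≠ 0 := fun h => by simp [h] at hw₀
  have hpq : (w + s) / w * ((w - s) / w) = 1 - (s : ℂ) ^ 2 / w ^ 2 := by field_simp; ring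
  rw [← div_mul_cancel₀ (w + s) hw0, ← div_mul_cancel₀ (w - s) hw0,
    log_mul_of_re_pos hp hw₀, log_mul_of_re_pos hq hw₀, ← hpq, log_mul_of_re_pos hp hq,
    show ∀ p q l : ℂ, 1 / 2 * (p + l) + 1 / 2 * (q + l) = l + 1 / 2 * (p + q) by
      intros; ring, exp_add, exp_log hw0]

lemma exp_half_log_neg_add_half_log_neg {x y : ℂ} (hx : 0 < x.re) (hy : 0 < y.re)
    (hxy : x.im = y.im) :
    exp (1 / 2 * log (-x) + 1 / 2 * log (-y)) = -exp (1 / 2 * log x + 1 / 2 * log y) := by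
  have hlog (z : ℂ) : log (-z) = log z + (arg (-z) - arg z) * I := by
    rw [log, log, norm_neg]; ring
  rw [hlog x, hlog y]
  rcases lt_or_ge 0 x.im with him | him
  · rw [arg_neg_eq_arg_sub_pi_of_im_pos him, arg_neg_eq_arg_sub_pi_of_im_pos (hxy ▸ him),
      ← exp_sub_pi_mul_I]
    congr 1; push_cast; ring
  · rw [arg_neg_eq_arg_add_pi_iff.mpr (him.lt_or_eq.imp_right fun h => ⟨h, hx⟩),
      arg_neg_eq_arg_add_pi_iff.mpr ((hxy ▸ him).lt_or_eq.imp_right fun h => ⟨h, hy⟩),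
      ← exp_add_pi_mul_I]
    congr 1; push_cast; ring

lemma sqBr_eq_I_mul_exp (a : ℝ) (ζ : ℂ) :
    sqBr a ζ = I * exp (1 / 2 * log (-I * ζ + √(2 * cOf a)) +
      1 / 2 * log (-I * ζ - √(2 * cOf a))) := by
  have hp : ∀ s : ℂ, -I * (ζ + I * s) = -I * ζ + s := fun s => by
    linear_combination (-s) * I_mul_I
  have hm : ∀ s : ℂ, -I * (ζ - I * s) = -I * ζ - s := fun s => by
    linear_combination s * I_mul_I
  have hI : ∀ z, I * exp z = exp (z + Real.pi / 2 * I) := fun z => by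
    rw [exp_add, exp_pi_div_two_mul_I, mul_comm]
  rw [sqBr, Lbr, Lbr, hp, hm, hI]
  ring_nf

noncomputable def sqrtFactor (κ ζ : ℂ) : ℂ := exp (1 / 2 * log (1 + κ / ζ ^ 2))

lemma sqBr_eq_mul_sqrtFactor {a : ℝ} (ha : 0 < a) {ζ : ℂ} (hζ : √(2 * cOf a) < |ζ.im|) :
    sqBr a ζ = ζ * sqrtFactor (2 * cOf a : ℝ) ζ := by
  set s := √(2 * cOf a) with hs
  have hs₀ : 0 ≤ s := Real.sqrt_nonneg _
  have hs2 : (s : ℂ) ^ 2 = (2 * cOf a : ℝ) := by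
    rw [← ofReal_pow, hs, Real.sq_sqrt (two_mul_cOf_pos ha).le]
  have hsq : ∀ u : ℂ, u ^ 2 = -1 → 1 - (s : ℂ) ^ 2 / (u * ζ) ^ 2 = 1 + (2 * cOf a : ℝ) / ζ ^ 2 :=
    fun u hu => by rw [mul_pow, hu, hs2, neg_one_mul, div_neg, sub_neg_eq_add]
  rw [sqBr_eq_I_mul_exp, sqrtFactor]
  rcases lt_abs.mp hζ with h | h
  · rw [exp_half_log_add_half_log_sub hs₀ (by simpa using h), hsq _ (by rw [neg_sq, I_sq])]
    linear_combination (-ζ * exp (1 / 2 * log (1 + (2 * cOf a : ℝ) / ζ ^ 2))) * I_mul_I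
  · have hre : s < (I * ζ).re := by simp; linarith
    rw [show -I * ζ + s = -(I * ζ - s) by ring, show -I * ζ - s = -(I * ζ + s) by ring,
      exp_half_log_neg_add_half_log_neg (by simp; linarith) (by simp; linarith) (by simp),
      add_comm, exp_half_log_add_half_log_sub hs₀ hre, hsq _ I_sq]
    linear_combination (-ζ * exp (1 / 2 * log (1 + (2 * cOf a : ℝ) / ζ ^ 2))) * I_mul_I

lemma sqrtFactor_sq {κ ζ : ℂ} (h : 1 + κ / ζ ^ 2 ≠ 0) : sqrtFactor κ ζ ^ 2 = 1 + κ / ζ ^ 2 := by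
  rw [sqrtFactor, ← exp_nat_mul, ← mul_assoc]
  norm_num
  exact exp_log h

lemma hasDerivAt_sqrtFactor {κ ζ : ℂ} (hζ : ζ ≠ 0) (h : 1 + κ / ζ ^ 2 ∈ slitPlane) :
    HasDerivAt (sqrtFactor κ) (-κ / (ζ ^ 3 * sqrtFactor κ ζ)) ζ := by
  have hu : HasDerivAt (fun z => 1 + κ / z ^ 2) (-(κ * (2 * ζ)) / (ζ ^ 2) ^ 2) ζ := by
    simpa using ((hasDerivAt_const ζ κ).div (hasDerivAt_pow 2 ζ) (pow_ne_zero 2 hζ)).const_add 1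
  have hF : exp (1 / 2 * log (1 + κ / ζ ^ 2)) ^ 2 = 1 + κ / ζ ^ 2 :=
    sqrtFactor_sq (slitPlane_ne_zero h)
  refine ((hu.clog h).const_mul (1 / 2)).cexp.congr_deriv ?_
  rw [sqrtFactor]
  generalize exp (1 / 2 * log (1 + κ / ζ ^ 2)) = F at hF ⊢
  rw [← hF]
  field_simp

lemma hasDerivAt_inv_sqrtFactor {κ ζ : ℂ} (hζ : ζ ≠ 0) (h : 1 + κ / ζ ^ 2 ∈ slitPlane) :
    HasDerivAt (fun z => (sqrtFactor κ z)⁻¹) (κ / (ζ * sqrtFactor κ ζ) ^ 3) ζ :=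
  ((hasDerivAt_sqrtFactor hζ h).inv (exp_ne_zero _)).congr_deriv (by field_simp)

lemma one_add_div_sq_mem_slitPlane {κ : ℝ} (hκ : 0 < κ) {ζ : ℂ} (h : κ < ζ.im ^ 2) :
    1 + (κ : ℂ) / ζ ^ 2 ∈ slitPlane := by
  have hy : 0 < ζ.im ^ 2 := hκ.trans h
  rw [mem_slitPlane_iff]
  by_cases hx : ζ.re = 0
  · left
    have hz : ζ ^ 2 = ((-ζ.im ^ 2 : ℝ) : ℂ) := by
      conv_lhs => rw [← re_add_im ζ, hx]
      push_cast
      linear_combination ζ.im ^ 2 * I_sq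
    rw [hz, ← ofReal_div, ← ofReal_one, ← ofReal_add, ofReal_re, div_neg, ← sub_eq_add_neg,
      sub_pos, div_lt_one hy]
    exact h
  · right
    have hζ : ζ ^ 2 ≠ 0 := pow_ne_zero 2 fun h0 => hx (by simp [h0])
    have him : (ζ ^ 2).im ≠ 0 := by
      rw [pow_two, mul_im]
      have : ζ.im ≠ 0 := fun h0 => by simp [h0] at hy
      rw [mul_comm ζ.im ζ.re, ← two_mul]
      exact mul_ne_zero two_ne_zero (mul_ne_zero hx this)
    simp only [add_im, one_im, zero_add, div_im, ofReal_im, zero_mul, zero_div, ofReal_re,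
      zero_sub, neg_ne_zero]
    exact div_ne_zero (mul_ne_zero hκ.ne' him) (normSq_pos.mpr hζ).ne'

lemma sq_lt_of_sqrt_lt_abs {κ y : ℝ} (h : √κ < |y|) : κ < y ^ 2 := by
  rw [← sq_abs]; exact (Real.sqrt_lt' ((Real.sqrt_nonneg κ).trans_lt h)).mp h

lemma ne_zero_of_sqrt_lt_abs_im {κ : ℝ} {ζ : ℂ} (h : √κ < |ζ.im|) : ζ ≠ 0 := by
  rintro rfl; simp at h; linarith [Real.sqrt_nonneg κ]

lemma Gbr_eventuallyEq {a : ℝ} (ha : 0 < a) {ζ : ℂ} (hζ : √(2 * cOf a) < |ζ.im|) :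
    Gbr a =ᶠ[𝓝 ζ] fun z => z * (1 - sqrtFactor (2 * cOf a : ℝ) z) / √(2 * cOf a) := by
  have hopen : IsOpen {z : ℂ | √(2 * cOf a) < |z.im|} :=
    isOpen_lt continuous_const (continuous_abs.comp continuous_im)
  filter_upwards [hopen.mem_nhds hζ] with z hz
  rw [Gbr, sqBr_eq_mul_sqrtFactor ha hz]
  ring

lemma hasDerivAt_Gbr {a : ℝ} (ha : 0 < a) {ζ : ℂ} (hζ : √(2 * cOf a) < |ζ.im|) :
    HasDerivAt (Gbr a) (-Gbr a ζ / (ζ * sqrtFactor (2 * cOf a : ℝ) ζ)) ζ := by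
  have hζ₀ := ne_zero_of_sqrt_lt_abs_im hζ
  have hslit := one_add_div_sq_mem_slitPlane (two_mul_cOf_pos ha) (sq_lt_of_sqrt_lt_abs hζ)
  have hs : (√(2 * cOf a) : ℂ) ≠ 0 := by
    exact_mod_cast (Real.sqrt_pos.mpr (two_mul_cOf_pos ha)).ne'
  have hG := Gbr_eventuallyEq ha hζ
  -- `G' = (1 - 1/F)/√(2c)`, rewritten via `F² = 1 + 2c/ζ²` so that `G'/G = -1/(ζ F)`.
  refine (((hasDerivAt_id' ζ).mul ((hasDerivAt_sqrtFactor hζ₀ hslit).const_sub 1)).div_const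
    _).congr_of_eventuallyEq hG |>.congr_deriv ?_
  have hF : sqrtFactor (2 * cOf a : ℝ) ζ ^ 2 * ζ ^ 2 = ζ ^ 2 + (2 * cOf a : ℝ) := by
    rw [sqrtFactor_sq (slitPlane_ne_zero hslit)]; field_simp
  have hF₀ : sqrtFactor (2 * cOf a : ℝ) ζ ≠ 0 := exp_ne_zero _
  rw [hG.eq_of_nhds]
  field_simp
  linear_combination -hF

lemma HasDerivAt.lbr {f : ℂ → ℂ} {f' x : ℂ} (hf : HasDerivAt f f' x) (h : -I * f x ∈ slitPlane) :
    HasDerivAt (fun y => Lbr (f y)) (f' / f x) x :=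
  (((hf.const_mul (-I)).clog h).add_const _).congr_deriv
    (mul_div_mul_left _ _ (neg_ne_zero.mpr I_ne_zero))

lemma HasDerivAt.l3 {f : ℂ → ℂ} {f' x : ℂ} (hf : HasDerivAt f f' x) (h : -f x ∈ slitPlane) :
    HasDerivAt (fun y => L3 (f y)) (f' / f x) x :=
  ((hf.neg.clog h).add_const _).congr_deriv (neg_div_neg_eq _ _)

noncomputable def gxiDeriv (a ξ : ℝ) (ω : ℂ) : ℂ :=
  (1 + ξ * (sqrtFactor (2 * cOf a : ℝ) ω)⁻¹ + ξ * (sqrtFactor (2 * cOf a : ℝ) ω⁻¹)⁻¹) / ω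

lemma hasDerivAt_gxi {a : ℝ} (ha : 0 < a) (ξ : ℝ) {ω : ℂ} (h₁ : √(2 * cOf a) < |ω.im|)
    (h₂ : √(2 * cOf a) < |ω⁻¹.im|) (h₃ : -I * ω ∈ slitPlane)
    (h₄ : -I * Gbr a ω ∈ slitPlane) (h₅ : -Gbr a ω⁻¹ ∈ slitPlane) :
    HasDerivAt (gxi a ξ) (gxiDeriv a ξ ω) ω := by
  have hω := ne_zero_of_sqrt_lt_abs_im h₁
  have hG : Gbr a ω ≠ 0 := by rintro h; simp [h] at h₄
  have hG' : Gbr a ω⁻¹ ≠ 0 := by rintro h; simp [h] at h₅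
  have hF' : sqrtFactor (2 * cOf a : ℝ) ω⁻¹ ≠ 0 := exp_ne_zero _
  have d₁ := HasDerivAt.lbr (hasDerivAt_id' ω) h₃
  have d₂ := (hasDerivAt_Gbr ha h₁).lbr h₄
  have d₃ := ((hasDerivAt_Gbr ha h₂).comp ω (hasDerivAt_inv hω)).l3 h₅
  simp only [Function.comp_apply] at d₃
  refine ((d₁.sub (d₂.const_mul (ξ : ℂ))).add (d₃.const_mul (ξ : ℂ))).congr_deriv ?_
  rw [gxiDeriv]
  generalize Gbr a ω⁻¹ = G' at hG' ⊢
  generalize sqrtFactor (2 * cOf a : ℝ) ω⁻¹ = F' at hF' ⊢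
  field_simp
  ring

noncomputable def axisSqrt (κ v : ℝ) : ℝ := √(1 - κ / v ^ 2)

lemma axisSqrt_neg (κ v : ℝ) : axisSqrt κ (-v) = axisSqrt κ v := by simp [axisSqrt]

lemma sqrtFactor_I_mul {κ v : ℝ} (h : 0 < 1 - κ / v ^ 2) :
    sqrtFactor κ (I * v) = axisSqrt κ v := by
  have harg : 1 + (κ : ℂ) / (I * v) ^ 2 = (1 - κ / v ^ 2 : ℝ) := by
    rw [mul_pow, I_sq]; push_cast; ring
  rw [sqrtFactor, harg, ← ofReal_log h.le, axisSqrt, Real.sqrt_eq_rpow, Real.rpow_def_of_pos h,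
    ofReal_exp]
  push_cast
  ring_nf

lemma I_mul_ofReal_inv (u : ℝ) : (I * u)⁻¹ = I * (-u⁻¹ : ℝ) := by
  rw [mul_inv, inv_I]; push_cast; ring

lemma one_sub_div_sq_pos {κ v : ℝ} (h : √κ < |v|) : 0 < 1 - κ / v ^ 2 := by
  have hv : 0 < v ^ 2 := by
    rw [← sq_abs]; exact pow_pos ((Real.sqrt_nonneg κ).trans_lt h) 2
  rw [sub_pos, div_lt_one hv]
  exact sq_lt_of_sqrt_lt_abs h

lemma axisSqrt_pos {κ v : ℝ} (h : √κ < |v|) : 0 < axisSqrt κ v :=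
  Real.sqrt_pos.mpr (one_sub_div_sq_pos h)

lemma axisSqrt_lt_one {κ v : ℝ} (hκ : 0 < κ) (h : √κ < |v|) : axisSqrt κ v < 1 := by
  have hv : 0 < v ^ 2 := by
    rw [← sq_abs]; exact pow_pos ((Real.sqrt_nonneg κ).trans_lt h) 2
  rw [axisSqrt, Real.sqrt_lt' one_pos]
  have : 0 < κ / v ^ 2 := div_pos hκ hv
  linarith

lemma Gbr_I_mul {a v : ℝ} (ha : 0 < a) (hv : √(2 * cOf a) < |v|) :
    Gbr a (I * v) = I * (v * (1 - axisSqrt (2 * cOf a) v) / √(2 * cOf a) : ℝ) := by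
  rw [(Gbr_eventuallyEq ha (by simpa using hv)).eq_of_nhds,
    sqrtFactor_I_mul (one_sub_div_sq_pos hv)]
  push_cast
  ring

lemma eventually_hasDerivAt_gxi {a : ℝ} (ha : 0 < a) (ξ : ℝ) {u : ℝ}
    (hu : √(2 * cOf a) < u) (hu' : √(2 * cOf a) < u⁻¹) :
    ∀ᶠ ω in 𝓝 (I * u), HasDerivAt (gxi a ξ) (gxiDeriv a ξ ω) ω := by
  set s := √(2 * cOf a)
  have hs : 0 < s := Real.sqrt_pos.mpr (two_mul_cOf_pos ha)
  have hu₀ : 0 < u := hs.trans hu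
  have hne : I * (u : ℂ) ≠ 0 := mul_ne_zero I_ne_zero (ofReal_ne_zero.mpr hu₀.ne')
  have habs : s < |u| := by rwa [abs_of_pos hu₀]
  have habs' : s < |-u⁻¹| := by rwa [abs_neg, abs_of_pos (inv_pos.mpr hu₀)]
  have hy := axisSqrt_lt_one (two_mul_cOf_pos ha) habs
  have hx := axisSqrt_lt_one (two_mul_cOf_pos ha) habs'
  have hinv : ContinuousAt (fun ω : ℂ => ω⁻¹) (I * u) := continuousAt_inv₀ hne
  have hcont_im : Continuous fun ω : ℂ => |ω.im| := continuous_abs.comp continuous_im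
  have hGc : ContinuousAt (Gbr a) (I * u) :=
    (hasDerivAt_Gbr ha (by simpa only [I_mul_im, ofReal_re] using habs)).continuousAt
  have hGc' : ContinuousAt (Gbr a) (I * u)⁻¹ := by
    rw [I_mul_ofReal_inv]
    exact (hasDerivAt_Gbr ha (by simpa only [I_mul_im, ofReal_re] using habs')).continuousAt
  have e₁ : ∀ᶠ ω in 𝓝 (I * u), s < |ω.im| :=
    continuousAt_const.eventually_lt hcont_im.continuousAt
      (by simpa only [I_mul_im, ofReal_re] using habs)
  have e₂ : ∀ᶠ ω in 𝓝 (I * u), s < |ω⁻¹.im| :=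
    continuousAt_const.eventually_lt (hcont_im.continuousAt.comp hinv)
      (by simpa only [Function.comp_apply, I_mul_ofReal_inv, I_mul_im, ofReal_re] using habs')
  have e₃ : ∀ᶠ ω in 𝓝 (I * u), -I * ω ∈ slitPlane := by
    refine (continuousAt_const.mul continuousAt_id).eventually_mem (isOpen_slitPlane.mem_nhds ?_)
    show -I * (I * u) ∈ slitPlane
    rw [← mul_assoc, neg_mul, I_mul_I, neg_neg, one_mul]
    exact ofReal_mem_slitPlane.mpr hu₀
  have e₄ : ∀ᶠ ω in 𝓝 (I * u), -I * Gbr a ω ∈ slitPlane := by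
    refine (continuousAt_const.mul hGc).eventually_mem (isOpen_slitPlane.mem_nhds ?_)
    show -I * Gbr a (I * u) ∈ slitPlane
    rw [Gbr_I_mul ha habs, ← mul_assoc, neg_mul, I_mul_I, neg_neg, one_mul]
    exact ofReal_mem_slitPlane.mpr (div_pos (mul_pos hu₀ (sub_pos.mpr hy)) hs)
  have e₅ : ∀ᶠ ω in 𝓝 (I * u), -Gbr a ω⁻¹ ∈ slitPlane := by
    refine (hGc'.comp hinv).neg.eventually_mem (isOpen_slitPlane.mem_nhds ?_)
    show -Gbr a (I * u)⁻¹ ∈ slitPlane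
    rw [I_mul_ofReal_inv, Gbr_I_mul ha habs', mem_slitPlane_iff]
    right
    simp only [neg_im, I_mul_im, neg_ne_zero]
    exact (div_neg_of_neg_of_pos (mul_neg_of_neg_of_pos (by simpa using hu₀) (sub_pos.mpr hx))
      hs).ne
  filter_upwards [e₁, e₂, e₃, e₄, e₅] with ω h₁ h₂ h₃ h₄ h₅
  exact hasDerivAt_gxi ha ξ h₁ h₂ h₃ h₄ h₅

lemma sqrtFactor_I_mul_of_lt {a u : ℝ} (hu : √(2 * cOf a) < u) :
    sqrtFactor (2 * cOf a : ℝ) (I * u) = axisSqrt (2 * cOf a) u :=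
  sqrtFactor_I_mul (one_sub_div_sq_pos (lt_abs.mpr (.inl hu)))

lemma sqrtFactor_inv_I_mul_of_lt {a u : ℝ} (hu' : √(2 * cOf a) < u⁻¹) :
    sqrtFactor (2 * cOf a : ℝ) (I * u)⁻¹ = axisSqrt (2 * cOf a) u⁻¹ := by
  have hv : √(2 * cOf a) < |-u⁻¹| := lt_abs.mpr (.inr (by rwa [neg_neg]))
  rw [I_mul_ofReal_inv, sqrtFactor_I_mul (one_sub_div_sq_pos hv), axisSqrt_neg]

lemma deriv_gxi_eventuallyEq {a : ℝ} (ha : 0 < a) (ξ : ℝ) {u : ℝ}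
    (hu : √(2 * cOf a) < u) (hu' : √(2 * cOf a) < u⁻¹) :
    deriv (gxi a ξ) =ᶠ[𝓝 (I * u)] gxiDeriv a ξ :=
  (eventually_hasDerivAt_gxi ha ξ hu hu').mono fun _ h => h.deriv

lemma deriv_gxi_I_mul {a : ℝ} (ha : 0 < a) (ξ : ℝ) {u : ℝ}
    (hu : √(2 * cOf a) < u) (hu' : √(2 * cOf a) < u⁻¹) :
    deriv (gxi a ξ) (I * u) =
      (1 + ξ * (axisSqrt (2 * cOf a) u)⁻¹ + ξ * (axisSqrt (2 * cOf a) u⁻¹)⁻¹ : ℝ) / (I * u) := by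
  rw [(deriv_gxi_eventuallyEq ha ξ hu hu').eq_of_nhds, gxiDeriv,
    sqrtFactor_I_mul_of_lt hu, sqrtFactor_inv_I_mul_of_lt hu']
  push_cast
  ring

lemma hasDerivAt_gxiDeriv_of_eq_zero {a ξ : ℝ} {ω : ℂ} (hω : ω ≠ 0)
    (h₁ : 1 + (2 * cOf a : ℝ) / ω ^ 2 ∈ slitPlane) (h₂ : 1 + (2 * cOf a : ℝ) / ω⁻¹ ^ 2 ∈ slitPlane)
    (hN : 1 + ξ * (sqrtFactor (2 * cOf a : ℝ) ω)⁻¹ + ξ * (sqrtFactor (2 * cOf a : ℝ) ω⁻¹)⁻¹ = 0) :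
    HasDerivAt (gxiDeriv a ξ) (ξ * (2 * cOf a : ℝ) * ((ω ^ 4 * sqrtFactor (2 * cOf a : ℝ) ω ^ 3)⁻¹ -
      (sqrtFactor (2 * cOf a : ℝ) ω⁻¹ ^ 3)⁻¹)) ω := by
  have dN := (((hasDerivAt_inv_sqrtFactor hω h₁).const_mul (ξ : ℂ)).const_add 1).add
    (((hasDerivAt_inv_sqrtFactor (inv_ne_zero hω) h₂).comp ω (hasDerivAt_inv hω)).const_mul (ξ : ℂ))
  simp only [Function.comp_apply] at dN
  refine (dN.div (hasDerivAt_id' ω) hω).congr_deriv ?_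
  simp only [Pi.add_apply]
  rw [hN]
  have hF' : sqrtFactor (2 * cOf a : ℝ) ω⁻¹ ≠ 0 := exp_ne_zero _
  generalize sqrtFactor (2 * cOf a : ℝ) ω⁻¹ = F' at hF' ⊢
  field_simp
  ring

lemma iteratedDeriv_two_gxi_I_mul {a : ℝ} (ha : 0 < a) (ξ : ℝ) {u : ℝ}
    (hu : √(2 * cOf a) < u) (hu' : √(2 * cOf a) < u⁻¹)
    (hN : 1 + ξ * (axisSqrt (2 * cOf a) u)⁻¹ + ξ * (axisSqrt (2 * cOf a) u⁻¹)⁻¹ = 0) :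
    iteratedDeriv 2 (gxi a ξ) (I * u) = (ξ * (2 * cOf a) *
      ((u ^ 4 * axisSqrt (2 * cOf a) u ^ 3)⁻¹ - (axisSqrt (2 * cOf a) u⁻¹ ^ 3)⁻¹) : ℝ) := by
  have hκ := two_mul_cOf_pos ha
  have hne : I * (u : ℂ) ≠ 0 :=
    mul_ne_zero I_ne_zero (ofReal_ne_zero.mpr ((Real.sqrt_nonneg _).trans_lt hu).ne')
  have h₁ : 1 + (2 * cOf a : ℝ) / (I * u) ^ 2 ∈ slitPlane := by
    refine one_add_div_sq_mem_slitPlane hκ (sq_lt_of_sqrt_lt_abs ?_)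
    simpa only [I_mul_im, ofReal_re] using lt_abs.mpr (.inl hu)
  have h₂ : 1 + (2 * cOf a : ℝ) / (I * u)⁻¹ ^ 2 ∈ slitPlane := by
    refine one_add_div_sq_mem_slitPlane hκ (sq_lt_of_sqrt_lt_abs ?_)
    simpa only [I_mul_ofReal_inv, I_mul_im, ofReal_re] using lt_abs.mpr (.inr (by rwa [neg_neg]))
  have hN' : 1 + ξ * (sqrtFactor (2 * cOf a : ℝ) (I * u))⁻¹ +
      ξ * (sqrtFactor (2 * cOf a : ℝ) (I * u)⁻¹)⁻¹ = 0 := by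
    rw [sqrtFactor_I_mul_of_lt hu, sqrtFactor_inv_I_mul_of_lt hu']
    exact_mod_cast hN
  rw [iteratedDeriv_succ, iteratedDeriv_one,
    (deriv_gxi_eventuallyEq ha ξ hu hu').deriv_eq,
    (hasDerivAt_gxiDeriv_of_eq_zero hne h₁ h₂ hN').deriv,
    sqrtFactor_I_mul_of_lt hu, sqrtFactor_inv_I_mul_of_lt hu',
    mul_pow, show I ^ 4 = 1 from I_pow_four, one_mul]
  push_cast
  ring

lemma pow_four_mul_axisSqrt_pow_three_lt {κ u : ℝ} (hκ : 0 ≤ κ) (hκu : κ < u ^ 2)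
    (hu : u ^ 2 < 1) : u ^ 4 * axisSqrt κ u ^ 3 < axisSqrt κ u⁻¹ ^ 3 := by
  have hu₂ : 0 < u ^ 2 := hκ.trans_lt hκu
  have hY : 0 ≤ 1 - κ / u ^ 2 := by rw [sub_nonneg, div_le_one hu₂]; exact hκu.le
  have hX : 1 - κ / u⁻¹ ^ 2 = 1 - κ * u ^ 2 := by rw [inv_pow, div_inv_eq_mul]
  have hlin : u ^ 2 - κ < 1 - κ * u ^ 2 := by nlinarith
  have hcube : ∀ x : ℝ, 0 ≤ x → (√x ^ 3) ^ 2 = x ^ 3 := fun x hx => by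
    rw [← pow_mul, mul_comm, pow_mul, Real.sq_sqrt hx]
  have hsq : (u ^ 4 * axisSqrt κ u ^ 3) ^ 2 < (axisSqrt κ u⁻¹ ^ 3) ^ 2 := by
    rw [axisSqrt, axisSqrt, hX, mul_pow, hcube _ hY, hcube _ (by linarith)]
    calc (u ^ 4) ^ 2 * (1 - κ / u ^ 2) ^ 3 = u ^ 2 * (u ^ 2 - κ) ^ 3 := by
          have hu₀ : u ≠ 0 := by rintro rfl; simp at hu₂
          field_simp
      _ ≤ (u ^ 2 - κ) ^ 3 := by nlinarith [pow_nonneg (sub_nonneg.mpr hκu.le) 3]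
      _ < (1 - κ * u ^ 2) ^ 3 := by gcongr
  exact lt_of_pow_lt_pow_left₀ 2 (pow_nonneg (Real.sqrt_nonneg _) 3) hsq

theorem statement7_general (a : ℝ) (ha0 : 0 < a) (ξ : ℝ)
    (hξ0 : ξ < 0)
    (t : ℝ) (ht1 : Real.sqrt (2 * cOf a) < t) (ht2 : t < 1)
    (hcrit : deriv (gxi a ξ) (Complex.I * (t : ℂ)) = 0) :
    deriv (gxi a ξ) (-(Complex.I * (t : ℂ))⁻¹) = 0 ∧
    (∃ r : ℝ, r < 0 ∧ iteratedDeriv 2 (gxi a ξ) (Complex.I * (t : ℂ)) = (r : ℂ)) ∧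
    (∃ r : ℝ, 0 < r ∧ iteratedDeriv 2 (gxi a ξ) (-(Complex.I * (t : ℂ))⁻¹) = (r : ℂ)) := by
  have hκ := two_mul_cOf_pos ha0
  have ht0 : 0 < t := (Real.sqrt_nonneg _).trans_lt ht1
  have ht' : √(2 * cOf a) < t⁻¹ := ht1.trans (ht2.trans ((one_lt_inv₀ ht0).mpr ht2))
  have ht'' : √(2 * cOf a) < t⁻¹⁻¹ := by rwa [inv_inv]
  have hrefl : -(I * (t : ℂ))⁻¹ = I * (t⁻¹ : ℝ) := by rw [I_mul_ofReal_inv]; push_cast; ring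
  set y := axisSqrt (2 * cOf a) t
  set x := axisSqrt (2 * cOf a) t⁻¹
  have hy : 0 < y ^ 3 := pow_pos (axisSqrt_pos (lt_abs.mpr (.inl ht1))) 3
  have hx : 0 < x ^ 3 := pow_pos (axisSqrt_pos (lt_abs.mpr (.inl ht'))) 3
  have hN : 1 + ξ * y⁻¹ + ξ * x⁻¹ = 0 := by
    rw [deriv_gxi_I_mul ha0 ξ ht1 ht', div_eq_zero_iff] at hcrit
    exact_mod_cast hcrit.resolve_right (mul_ne_zero I_ne_zero (ofReal_ne_zero.mpr ht0.ne'))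
  have hN' : 1 + ξ * x⁻¹ + ξ * (axisSqrt (2 * cOf a) t⁻¹⁻¹)⁻¹ = 0 := by
    rw [inv_inv]; linarith
  have hlt : t ^ 4 * y ^ 3 < x ^ 3 := pow_four_mul_axisSqrt_pow_three_lt hκ.le
    (sq_lt_of_sqrt_lt_abs (lt_abs.mpr (.inl ht1))) (pow_lt_one₀ ht0.le ht2 two_ne_zero)
  refine ⟨?_, ⟨_, ?_, iteratedDeriv_two_gxi_I_mul ha0 ξ ht1 ht' hN⟩,
    ⟨_, ?_, hrefl ▸ iteratedDeriv_two_gxi_I_mul ha0 ξ ht' ht'' hN'⟩⟩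
  · rw [hrefl, deriv_gxi_I_mul ha0 ξ ht' ht'', hN', ofReal_zero, zero_div]
  · refine mul_neg_of_neg_of_pos (mul_neg_of_neg_of_pos hξ0 hκ) (sub_pos.mpr ?_)
    exact inv_strictAnti₀ (by positivity) hlt
  · refine mul_pos_of_neg_of_neg (mul_neg_of_neg_of_pos hξ0 hκ) (sub_neg.mpr ?_)
    rw [inv_inv, mul_inv, inv_pow, inv_inv, ← div_eq_mul_inv, div_lt_iff₀ hx, inv_mul_eq_div,
      lt_div_iff₀ hy]
    exact hlt

/-- Let `-(1/2)√(1-2c) < ξ < 0` and suppose `ω_c ∈ i·(√(2c), 1)`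
satisfies `g_ξ′(ω_c) = 0`. Then `g_ξ′(-1/ω_c) = 0`; moreover `g_ξ″(ω_c)` is a negative
real number and `g_ξ″(-1/ω_c)` is a positive real number. -/
theorem statement7 (a : ℝ) (ha0 : 0 < a) (ha1 : a < 1) (ξ : ℝ)
    (hξl : -(1 / 2) * Real.sqrt (1 - 2 * cOf a) < ξ) (hξ0 : ξ < 0)
    (t : ℝ) (ht1 : Real.sqrt (2 * cOf a) < t) (ht2 : t < 1)
    (hcrit : deriv (gxi a ξ) (Complex.I * (t : ℂ)) = 0) :
    deriv (gxi a ξ) (-(Complex.I * (t : ℂ))⁻¹) = 0 ∧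
    (∃ r : ℝ, r < 0 ∧ iteratedDeriv 2 (gxi a ξ) (Complex.I * (t : ℂ)) = (r : ℂ)) ∧
    (∃ r : ℝ, 0 < r ∧ iteratedDeriv 2 (gxi a ξ) (-(Complex.I * (t : ℂ))⁻¹) = (r : ℂ)) :=
  statement7_general a ha0 ξ hξ0 t ht1 ht2 hcrit
end

section
/- Let ξ ∈ (-1, 0). The saddle point equation with ξ₁ = ξ₂ = ξ has two distinct solutions in (0, ∞) other than 1 if and only if -1 < ξ < -(1/2)√(1+2c). Moreover, when -1 < ξ < -(1/2)√(1+2c), there exists ω_c ∈ (1, ∞) such that the set of solutions of the saddle point equation in (0, ∞) is exactly {ω_c, 1/ω_c}, and Re g_ξ(ω_c) < 0 and Re g_ξ(1/ω_c) > 0. -/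
/-! On the positive axis all branches are real: `√(t²+2c)` is the positive root and `G(t) < 0`.
With `φ(t) = t/√(t²+2c)` the saddle point equation becomes `1 + ξ f(t) = 0` for
`f(t) = φ(t) + φ(1/t)`, and `h(t) = Re g_ξ(t)` satisfies `t h'(t) = 1 + ξ f(t)`, `h(1) = 0`,
`h(1/t) = -h(t)`. Now `f(1/t) = f(t)`, `f(1) = 2/√(1+2c)`, `f(t) < 1 + 1/(t√(2c))`, and for
`c < 1/2` the function `f` is strictly decreasing on `[1, ∞)`, because
`t²(t²+2c)³ - (1+2ct²)³ = (t²-1)(t²+1)(t⁴ + (6c-8c³)t² + 1)`. Hence `f = -1/ξ` has a solution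
`t ≠ 1` iff `-1/ξ < f(1)`, and then the solutions are exactly `ω_c > 1` and `1/ω_c`.
On `(1, ω_c)` we have `1 + ξ f < 0`, so `h` decreases from `h(1) = 0`: `h(ω_c) < 0 < h(1/ω_c)`. -/

noncomputable def sqrtRatio (c t : ℝ) : ℝ := t / √(t ^ 2 + 2 * c)

noncomputable def saddleSum (c t : ℝ) : ℝ := sqrtRatio c t + sqrtRatio c t⁻¹

-- For `t > 0`: `G(t) = -absG c t` and `Re g_ξ(t) = reG ξ c t`, where `c = cOf a`.
noncomputable def absG (c t : ℝ) : ℝ := (√(t ^ 2 + 2 * c) - t) / √(2 * c)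

noncomputable def reG (ξ c t : ℝ) : ℝ :=
  Real.log t - ξ * Real.log (absG c t) + ξ * Real.log (absG c t⁻¹)

section Real

variable {c : ℝ}

lemma lt_sqrt_sq_add (hc : 0 < c) (t : ℝ) : t < √(t ^ 2 + 2 * c) := by
  rcases lt_or_ge t 0 with ht | ht
  · exact ht.trans_le (Real.sqrt_nonneg _)
  · exact (Real.lt_sqrt ht).2 (by linarith)

lemma hasDerivAt_sqrt_sq_add (hc : 0 < c) (t : ℝ) :
    HasDerivAt (fun x => √(x ^ 2 + 2 * c)) (t / √(t ^ 2 + 2 * c)) t := by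
  convert ((hasDerivAt_pow 2 t).add_const (2 * c)).sqrt (by positivity) using 1
  field_simp
  norm_num
  ring

lemma sqrtRatio_hasDerivAt (hc : 0 < c) (t : ℝ) :
    HasDerivAt (sqrtRatio c) (2 * c / √(t ^ 2 + 2 * c) ^ 3) t := by
  have hpos : 0 < t ^ 2 + 2 * c := by positivity
  have hX0 := (Real.sqrt_pos.2 hpos).ne'
  refine ((hasDerivAt_id' t).div (hasDerivAt_sqrt_sq_add hc t) hX0).congr_deriv ?_
  field_simp
  rw [Real.sq_sqrt hpos.le]
  ring

lemma sqrtRatio_lt_one (hc : 0 < c) (t : ℝ) : sqrtRatio c t < 1 :=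
  (div_lt_one (Real.sqrt_pos.2 (by positivity))).2 (lt_sqrt_sq_add hc t)

lemma sqrtRatio_lt_div_sqrt (hc : 0 < c) {t : ℝ} (ht : 0 < t) : sqrtRatio c t < t / √(2 * c) :=
  div_lt_div_of_pos_left ht (Real.sqrt_pos.2 (by positivity))
    (Real.sqrt_lt_sqrt (by positivity) (by nlinarith))

lemma saddleSum_inv (t : ℝ) : saddleSum c t⁻¹ = saddleSum c t := by
  rw [saddleSum, saddleSum, inv_inv, add_comm]

lemma saddleSum_one : saddleSum c 1 = 2 / √(1 + 2 * c) := by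
  simp [saddleSum, sqrtRatio]
  ring

lemma saddleSum_hasDerivAt (hc : 0 < c) {t : ℝ} (ht : t ≠ 0) :
    HasDerivAt (saddleSum c)
      (2 * c / √(t ^ 2 + 2 * c) ^ 3 - 2 * c / √(t⁻¹ ^ 2 + 2 * c) ^ 3 / t ^ 2) t := by
  refine ((sqrtRatio_hasDerivAt hc t).add
    ((sqrtRatio_hasDerivAt hc t⁻¹).comp t (hasDerivAt_inv ht))).congr_deriv ?_
  ring

lemma one_add_mul_sq_pow_three_lt (hc : 0 < c) (hc2 : c < 1 / 2) {t : ℝ} (ht : 1 < t) :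
    (1 + 2 * c * t ^ 2) ^ 3 < t ^ 2 * (t ^ 2 + 2 * c) ^ 3 := by
  have hfactor : t ^ 2 * (t ^ 2 + 2 * c) ^ 3 - (1 + 2 * c * t ^ 2) ^ 3 =
      (t ^ 2 - 1) * (t ^ 2 + 1) * (t ^ 4 + (6 * c - 8 * c ^ 3) * t ^ 2 + 1) := by ring
  have hcoeff : 0 < 6 * c - 8 * c ^ 3 := by
    have : c ^ 2 < 1 / 4 := by nlinarith
    nlinarith
  have : 0 < (t ^ 2 - 1) * (t ^ 2 + 1) * (t ^ 4 + (6 * c - 8 * c ^ 3) * t ^ 2 + 1) := by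
    have : 0 < t ^ 2 - 1 := by nlinarith
    positivity
  linarith

lemma saddleSum_deriv_neg (hc : 0 < c) (hc2 : c < 1 / 2) {t : ℝ} (ht : 1 < t) :
    2 * c / √(t ^ 2 + 2 * c) ^ 3 - 2 * c / √(t⁻¹ ^ 2 + 2 * c) ^ 3 / t ^ 2 < 0 := by
  have key : √(t⁻¹ ^ 2 + 2 * c) ^ 3 * t ^ 2 < √(t ^ 2 + 2 * c) ^ 3 := by
    refine lt_of_pow_lt_pow_left₀ 2 (by positivity) ?_
    calc (√(t⁻¹ ^ 2 + 2 * c) ^ 3 * t ^ 2) ^ 2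
        = (√(t⁻¹ ^ 2 + 2 * c) ^ 2) ^ 3 * t ^ 4 := by ring
      _ = (1 + 2 * c * t ^ 2) ^ 3 / t ^ 2 := by
        rw [Real.sq_sqrt (by positivity)]
        field_simp
      _ < (t ^ 2 + 2 * c) ^ 3 := by
        rw [div_lt_iff₀ (by positivity)]
        linarith [one_add_mul_sq_pow_three_lt hc hc2 ht]
      _ = (√(t ^ 2 + 2 * c) ^ 3) ^ 2 := by
        rw [← pow_mul, mul_comm 3, pow_mul, Real.sq_sqrt (by positivity)]
  rw [sub_neg, div_div]
  exact div_lt_div_of_pos_left (by positivity) (by positivity) key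

lemma saddleSum_strictAntiOn (hc : 0 < c) (hc2 : c < 1 / 2) :
    StrictAntiOn (saddleSum c) (Set.Ici 1) := by
  have hderiv : ∀ t ∈ Set.Ici (1 : ℝ), HasDerivAt (saddleSum c) _ t := fun t ht =>
    saddleSum_hasDerivAt hc (one_pos.trans_le ht).ne'
  refine strictAntiOn_of_deriv_neg (convex_Ici 1)
    (fun t ht => (hderiv t ht).continuousAt.continuousWithinAt) fun t ht => ?_
  rw [interior_Ici] at ht
  rw [(hderiv t (Set.mem_Ici.2 ht.out.le)).deriv]
  exact saddleSum_deriv_neg hc hc2 ht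

lemma saddleSum_lt_saddleSum_one (hc : 0 < c) (hc2 : c < 1 / 2) {t : ℝ} (ht : 0 < t)
    (ht1 : t ≠ 1) : saddleSum c t < saddleSum c 1 := by
  rcases lt_or_gt_of_ne ht1 with h | h
  · rw [← saddleSum_inv]
    have h' : 1 < t⁻¹ := (one_lt_inv₀ ht).2 h
    exact saddleSum_strictAntiOn hc hc2 Set.self_mem_Ici h'.le h'
  · exact saddleSum_strictAntiOn hc hc2 Set.self_mem_Ici h.le h

lemma eq_or_eq_inv_of_saddleSum_eq (hc : 0 < c) (hc2 : c < 1 / 2) {t u : ℝ} (ht : 1 ≤ t)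
    (hu : 0 < u) (h : saddleSum c u = saddleSum c t) : u = t ∨ u = t⁻¹ := by
  rcases le_or_gt 1 u with hu1 | hu1
  · exact Or.inl ((saddleSum_strictAntiOn hc hc2).injOn hu1 ht h)
  · rw [← saddleSum_inv] at h
    have h' : 1 ≤ u⁻¹ := ((one_lt_inv₀ hu).2 hu1).le
    exact Or.inr (by rw [← (saddleSum_strictAntiOn hc hc2).injOn h' ht h, inv_inv])

lemma exists_saddleSum_eq (hc : 0 < c) {m : ℝ} (hm : 1 < m) (hm1 : m < saddleSum c 1) :
    ∃ t, 1 < t ∧ saddleSum c t = m := by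
  have hs : 0 < √(2 * c) := Real.sqrt_pos.2 (by positivity)
  set T := max 1 (√(2 * c) * (m - 1))⁻¹
  have hT : 1 ≤ T := le_max_left _ _
  have hT0 : 0 < T := one_pos.trans_le hT
  have hsum : saddleSum c T < m := by
    have h1 := sqrtRatio_lt_one hc T
    have h2 := sqrtRatio_lt_div_sqrt hc (inv_pos.2 hT0)
    have h3 : T⁻¹ / √(2 * c) ≤ m - 1 := by
      rw [div_le_iff₀ hs, mul_comm]
      exact inv_le_of_inv_le₀ (mul_pos hs (sub_pos.2 hm)) (le_max_right _ _)
    rw [saddleSum]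
    linarith
  have hcont : ContinuousOn (saddleSum c) (Set.Icc 1 T) := fun t ht =>
    (saddleSum_hasDerivAt hc (one_pos.trans_le ht.1).ne').continuousAt.continuousWithinAt
  obtain ⟨t, ⟨ht1, -⟩, hmt⟩ := intermediate_value_Icc' hT hcont ⟨hsum.le, hm1.le⟩
  exact ⟨t, ht1.lt_of_ne (by rintro rfl; linarith), hmt⟩

lemma absG_pos (hc : 0 < c) (t : ℝ) : 0 < absG c t :=
  div_pos (sub_pos.2 (lt_sqrt_sq_add hc t)) (Real.sqrt_pos.2 (by positivity))

lemma log_absG_hasDerivAt (hc : 0 < c) (t : ℝ) :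
    HasDerivAt (fun x => Real.log (absG c x)) (-1 / √(t ^ 2 + 2 * c)) t := by
  have hG : HasDerivAt (absG c) ((t / √(t ^ 2 + 2 * c) - 1) / √(2 * c)) t :=
    ((hasDerivAt_sqrt_sq_add hc t).sub (hasDerivAt_id' t)).div_const _
  refine (hG.log (absG_pos hc t).ne').congr_deriv ?_
  have hne : √(t ^ 2 + 2 * c) - t ≠ 0 := (sub_pos.2 (lt_sqrt_sq_add hc t)).ne'
  have hs : √(2 * c) ≠ 0 := (Real.sqrt_pos.2 (by positivity)).ne'
  rw [absG]
  field_simp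
  ring

lemma reG_hasDerivAt (hc : 0 < c) {ξ t : ℝ} (ht : 0 < t) :
    HasDerivAt (reG ξ c) ((1 + ξ * saddleSum c t) / t) t := by
  have hinv := (log_absG_hasDerivAt hc t⁻¹).comp t (hasDerivAt_inv ht.ne')
  refine (((Real.hasDerivAt_log ht.ne').sub ((log_absG_hasDerivAt hc t).const_mul ξ)).add
    (hinv.const_mul ξ)).congr_deriv ?_
  have hX := (Real.sqrt_pos.2 (show 0 < t ^ 2 + 2 * c by positivity)).ne'
  have hX' := (Real.sqrt_pos.2 (show 0 < t⁻¹ ^ 2 + 2 * c by positivity)).ne'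
  rw [saddleSum, sqrtRatio, sqrtRatio]
  field_simp
  ring

lemma reG_one {ξ : ℝ} : reG ξ c 1 = 0 := by
  simp [reG]

lemma reG_inv {ξ t : ℝ} : reG ξ c t⁻¹ = -reG ξ c t := by
  rw [reG, reG, inv_inv, Real.log_inv]
  ring

lemma reG_neg_of_root (hc : 0 < c) (hc2 : c < 1 / 2) {ξ t : ℝ} (hξ : ξ < 0) (ht : 1 < t)
    (hroot : 1 + ξ * saddleSum c t = 0) : reG ξ c t < 0 := by
  have hanti : StrictAntiOn (reG ξ c) (Set.Icc 1 t) := by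
    refine strictAntiOn_of_deriv_neg (convex_Icc 1 t) (fun x hx =>
      (reG_hasDerivAt hc (one_pos.trans_le hx.1)).continuousAt.continuousWithinAt) ?_
    intro x hx
    rw [interior_Icc] at hx
    rw [(reG_hasDerivAt hc (one_pos.trans hx.1)).deriv]
    have hlt : saddleSum c t < saddleSum c x :=
      saddleSum_strictAntiOn hc hc2 hx.1.le (hx.1.trans hx.2).le hx.2
    exact div_neg_of_neg_of_pos (by nlinarith) (one_pos.trans hx.1)
  simpa [reG_one] using hanti (Set.left_mem_Icc.2 ht.le) (Set.right_mem_Icc.2 ht.le) ht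

lemma lt_neg_half_sqrt_iff (hc : 0 ≤ c) {ξ : ℝ} :
    ξ < -(1 / 2) * √(1 + 2 * c) ↔ 1 + ξ * saddleSum c 1 < 0 := by
  have hfactor : 1 + ξ * (2 / √(1 + 2 * c)) =
      (ξ - -(1 / 2) * √(1 + 2 * c)) * (2 / √(1 + 2 * c)) := by
    field_simp
    ring
  rw [saddleSum_one, hfactor, ← lt_div_iff₀ (by positivity), zero_div, sub_neg]

lemma exists_one_lt_root (hc : 0 < c) {ξ : ℝ} (hξ1 : -1 < ξ) (hξ0 : ξ < 0)
    (h1 : 1 + ξ * saddleSum c 1 < 0) : ∃ t, 1 < t ∧ 1 + ξ * saddleSum c t = 0 := by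
  obtain ⟨t, ht, hmt⟩ := exists_saddleSum_eq hc (m := -1 / ξ)
    ((lt_div_iff_of_neg hξ0).2 (by linarith)) ((div_lt_iff_of_neg hξ0).2 (by linarith))
  refine ⟨t, ht, ?_⟩
  rw [hmt]
  field_simp [hξ0.ne]
  ring

end Real

lemma cOf_pos {a : ℝ} (ha : 0 < a) : 0 < cOf a := by
  unfold cOf
  positivity

lemma cOf_lt_half {a : ℝ} (ha0 : 0 < a) (ha1 : a < 1) : cOf a < 1 / 2 := by
  unfold cOf
  rw [div_lt_div_iff₀ (by positivity) two_pos]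
  nlinarith

section Complex

open ComplexConjugate

lemma Lbr_re (z : ℂ) : (Lbr z).re = Real.log ‖z‖ := by
  simp [Lbr, Complex.log_re]

lemma L3_re (z : ℂ) : (L3 z).re = Real.log ‖z‖ := by
  simp [L3, Complex.log_re]

lemma Lbr_add_Lbr_conj {w : ℂ} (hw : 0 < w.re) :
    Lbr w + Lbr (conj w) = 2 * Real.log ‖w‖ := by
  set u := -Complex.I * w with hu
  have hu_im : u.im < 0 := by simp [hu, hw]
  have hu_norm : ‖u‖ = ‖w‖ := by simp [hu]
  have hconj : -Complex.I * conj w = -conj u := by simp [hu]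
  have harg : (-conj u).arg = -(u.arg + Real.pi) := by
    rw [← map_neg, Complex.arg_conj, if_neg, Complex.arg_neg_eq_arg_add_pi_of_im_neg hu_im]
    rw [Complex.arg_eq_pi_iff]
    simp [hu_im.ne]
  apply Complex.ext
  · simp [Lbr, Complex.log_re, hconj, ← hu, hu_norm]
    ring
  · simp [Lbr, Complex.log_im, hconj, ← hu, harg]
    ring

lemma sqBr_ofReal {a t : ℝ} (ha : 0 ≤ a) (ht : 0 < t) :
    sqBr a t = (√(t ^ 2 + 2 * cOf a) : ℝ) := by
  have hc : 0 ≤ cOf a := by unfold cOf; positivity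
  have hconj : (t : ℂ) - Complex.I * (√(2 * cOf a) : ℝ) =
      conj ((t : ℂ) + Complex.I * (√(2 * cOf a) : ℝ)) := by
    simp [sub_eq_add_neg]
  have hnorm : ‖(t : ℂ) + Complex.I * (√(2 * cOf a) : ℝ)‖ = √(t ^ 2 + 2 * cOf a) := by
    rw [mul_comm, Complex.norm_add_mul_I, Real.sq_sqrt (by positivity)]
  have hpos : 0 < √(t ^ 2 + 2 * cOf a) := Real.sqrt_pos.2 (by positivity)
  rw [sqBr, hconj, ← mul_add, Lbr_add_Lbr_conj (by simpa using ht), hnorm, ← mul_assoc,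
    one_div, inv_mul_cancel₀ two_ne_zero, one_mul, ← Complex.ofReal_exp, Real.exp_log hpos]

lemma Gbr_ofReal {a t : ℝ} (ha : 0 ≤ a) (ht : 0 < t) :
    Gbr a t = (-absG (cOf a) t : ℝ) := by
  rw [Gbr, sqBr_ofReal ha ht, absG]
  push_cast
  ring

lemma saddleEq_ofReal_iff {a ξ t : ℝ} (ha : 0 ≤ a) (ht : 0 < t) :
    saddleEq a ξ ξ t ↔ 1 + ξ * saddleSum (cOf a) t = 0 := by
  rw [saddleEq, ← Complex.ofReal_inv, sqBr_ofReal ha ht, sqBr_ofReal ha (inv_pos.2 ht),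
    saddleSum, sqrtRatio, sqrtRatio, ← Complex.ofReal_eq_zero]
  push_cast
  congr! 1
  ring

lemma re_gxi_ofReal {a ξ t : ℝ} (ha : 0 < a) (ht : 0 < t) :
    (gxi a ξ t).re = reG ξ (cOf a) t := by
  have hc := cOf_pos ha
  rw [gxi, ← Complex.ofReal_inv, Gbr_ofReal ha.le ht, Gbr_ofReal ha.le (inv_pos.2 ht)]
  simp [Lbr_re, L3_re, reG, abs_of_pos ht, abs_of_pos (absG_pos hc _)]

lemma setOf_saddleEq_eq {a ξ t : ℝ} (ha0 : 0 < a) (ha1 : a < 1) (hξ : ξ ≠ 0) (ht : 1 < t)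
    (hroot : 1 + ξ * saddleSum (cOf a) t = 0) :
    {ω : ℂ | (∃ s : ℝ, 0 < s ∧ ω = s) ∧ saddleEq a ξ ξ ω} = {(t : ℂ), (t : ℂ)⁻¹} := by
  have ht0 : 0 < t := one_pos.trans ht
  ext ω
  simp only [Set.mem_ofPred_eq, Set.mem_insert_iff, Set.mem_singleton_iff]
  constructor
  · rintro ⟨⟨u, hu, rfl⟩, hsat⟩
    have hroot_u := (saddleEq_ofReal_iff ha0.le hu).1 hsat
    have heq : saddleSum (cOf a) u = saddleSum (cOf a) t :=
      mul_left_cancel₀ hξ (by linarith)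
    rcases eq_or_eq_inv_of_saddleSum_eq (cOf_pos ha0) (cOf_lt_half ha0 ha1) ht.le hu heq
      with rfl | rfl
    · exact Or.inl rfl
    · exact Or.inr (Complex.ofReal_inv t)
  · rintro (rfl | rfl)
    · exact ⟨⟨t, ht0, rfl⟩, (saddleEq_ofReal_iff ha0.le ht0).2 hroot⟩
    · rw [← Complex.ofReal_inv]
      refine ⟨⟨t⁻¹, inv_pos.2 ht0, rfl⟩, (saddleEq_ofReal_iff ha0.le (inv_pos.2 ht0)).2 ?_⟩
      rwa [saddleSum_inv]

end Complex

/-- Let `ξ ∈ (-1, 0)`. The saddle point equation with `ξ₁ = ξ₂ = ξ` has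
two distinct solutions in `(0, ∞)` other than `1` if and only if `-1 < ξ < -(1/2)√(1+2c)`.
Moreover, when `-1 < ξ < -(1/2)√(1+2c)`, there exists `ω_c ∈ (1, ∞)` such that the set of
solutions of the saddle point equation in `(0, ∞)` is exactly `{ω_c, 1/ω_c}`, and
`Re g_ξ(ω_c) < 0` and `Re g_ξ(1/ω_c) > 0`. -/
theorem statement13 (a : ℝ) (ha0 : 0 < a) (ha1 : a < 1) (ξ : ℝ)
    (hξ1 : -1 < ξ) (hξ0 : ξ < 0) :
    ((∃ ω₁ ω₂ : ℂ, ω₁ ≠ ω₂ ∧ ω₁ ≠ 1 ∧ ω₂ ≠ 1 ∧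
        (∃ t : ℝ, 0 < t ∧ ω₁ = (t : ℂ)) ∧ (∃ t : ℝ, 0 < t ∧ ω₂ = (t : ℂ)) ∧
        saddleEq a ξ ξ ω₁ ∧ saddleEq a ξ ξ ω₂) ↔
      (-1 < ξ ∧ ξ < -(1 / 2) * Real.sqrt (1 + 2 * cOf a))) ∧
    (ξ < -(1 / 2) * Real.sqrt (1 + 2 * cOf a) →
      ∃ t : ℝ, 1 < t ∧
        {ω : ℂ | (∃ s : ℝ, 0 < s ∧ ω = (s : ℂ)) ∧ saddleEq a ξ ξ ω} =
          {(t : ℂ), ((t : ℂ))⁻¹} ∧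
        (gxi a ξ (t : ℂ)).re < 0 ∧ 0 < (gxi a ξ ((t : ℂ)⁻¹)).re) := by
  have hc := cOf_pos ha0
  have hc2 := cOf_lt_half ha0 ha1
  rw [lt_neg_half_sqrt_iff hc.le]
  refine ⟨⟨?_, fun h => ?_⟩, fun h => ?_⟩
  · rintro ⟨-, -, -, hne1, -, ⟨t, ht, rfl⟩, -, hsat, -⟩
    have hlt := saddleSum_lt_saddleSum_one hc hc2 ht (by rintro rfl; simp at hne1)
    exact ⟨hξ1, by nlinarith [(saddleEq_ofReal_iff ha0.le ht).1 hsat]⟩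
  · obtain ⟨t, ht, hroot⟩ := exists_one_lt_root hc hξ1 hξ0 h.2
    have ht0 : 0 < t := one_pos.trans ht
    have htinv : t⁻¹ < 1 := inv_lt_one_of_one_lt₀ ht
    refine ⟨t, (t : ℂ)⁻¹, ?_, by exact_mod_cast ht.ne', ?_, ⟨t, ht0, rfl⟩,
      ⟨t⁻¹, inv_pos.2 ht0, (Complex.ofReal_inv t).symm⟩,
      (saddleEq_ofReal_iff ha0.le ht0).2 hroot, ?_⟩
    all_goals rw [← Complex.ofReal_inv]
    · exact_mod_cast (htinv.trans ht).ne'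
    · exact_mod_cast htinv.ne
    · rwa [saddleEq_ofReal_iff ha0.le (inv_pos.2 ht0), saddleSum_inv]
  · obtain ⟨t, ht, hroot⟩ := exists_one_lt_root hc hξ1 hξ0 h
    have ht0 : 0 < t := one_pos.trans ht
    have hneg := reG_neg_of_root hc hc2 hξ0 ht hroot
    refine ⟨t, ht, setOf_saddleEq_eq ha0 ha1 hξ0.ne ht hroot, ?_, ?_⟩
    · rwa [re_gxi_ofReal ha0 ht0]
    · rw [← Complex.ofReal_inv, re_gxi_ofReal ha0 (inv_pos.2 ht0), reG_inv]
      linarith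
end
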